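/- Let G be a finite non-prime graph with |V(G)| ≥ 4 such that every module of G that is a clique or a stable set has cardinality at most 1 (i.e., m(G) = 1). Then G admits a prime extension obtained by adding a single vertex, i.e., p(G) = 1. -/

import Mathlib

/-- `M` is a module of `G`: every vertex outside `M` is adjacent to all of `M` or to none. -/
def IsModule {V : Type*} (G : SimpleGraph V) (M : Set V) : Prop :=
  ∀ v ∉ M, (∀ m ∈ M, G.Adj v m) ∨ (∀ m ∈ M, ¬ G.Adj v m)

/-- `G` is prime: at least 4 vertices and only trivial modules. -/
def IsPrimeGraph {V : Type*} (G : SimpleGraph V) : Prop :=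
  4 ≤ Nat.card V ∧ ∀ M : Set V, IsModule G M → M = Set.univ ∨ M.Subsingleton

/-- `M` is a clique: all distinct vertices of `M` are adjacent. -/
def IsCliqueSet {V : Type*} (G : SimpleGraph V) (M : Set V) : Prop :=
  ∀ a ∈ M, ∀ b ∈ M, a ≠ b → G.Adj a b

/-- `M` is a stable (independent) set. -/
def IsStableSet {V : Type*} (G : SimpleGraph V) (M : Set V) : Prop :=
  ∀ a ∈ M, ∀ b ∈ M, ¬ G.Adj a b

/-- `G` admits a prime extension obtained by adding exactly `p` new vertices. -/
def HasPrimeExt {V : Type*} (G : SimpleGraph V) (p : ℕ) : Prop :=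
  ∃ H : SimpleGraph (V ⊕ Fin p),
    (∀ a b : V, H.Adj (Sum.inl a) (Sum.inl b) ↔ G.Adj a b) ∧ IsPrimeGraph H

/-- The prime bound `p(G)`: the least number of added vertices in a prime extension. -/
noncomputable def primeBound {V : Type*} (G : SimpleGraph V) : ℕ :=
  sInf {p : ℕ | HasPrimeExt G p}

/-- `m(G)`: the largest cardinality of a module of `G` that is a clique or a stable set. -/
noncomputable def modCliqueStab {V : Type*} (G : SimpleGraph V) : ℕ :=
  sSup {n : ℕ | ∃ M : Set V, IsModule G M ∧ (IsCliqueSet G M ∨ IsStableSet G M) ∧ M.ncard = n}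

/-!
Two-element sets are cliques or stable sets, so `G` has no two-element module, hence no
three-element one (some vertex of a triple sees the other two alike), and every nontrivial module
has at least four vertices. A minimal nontrivial module is then contained in or disjoint from
every nontrivial module; in particular distinct minimal ones are disjoint. Since `2 ^ |F| > 2 |F|
+ 2`, each minimal `F` contains a proper nonempty subset `T F` that agrees, away from `x`, with
the neighbourhood of no `x ∈ F`. A new vertex joined to every `T F`, and to those vertices outside
all minimal modules that are not adjacent to a fixed `f₀` of a minimal module, splits every
nontrivial module of `G` and is told apart from every nonempty proper module by some vertex
outside it; so the one-vertex extension is prime, while `G` itself is not.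
-/

open Finset in
theorem Finset.exists_subset_forall_erase_ne {α : Type*} [DecidableEq α] {s : Finset α}
    (hs : 4 ≤ #s) (N : α → Finset α) :
    ∃ t ⊆ s, t.Nonempty ∧ t ≠ s ∧ ∀ x ∈ s, t.erase x ≠ N x := by
  -- the only `t` with `t.erase x = N x` are `N x` and `insert x (N x)`
  set bad := insert ∅ (insert s (s.image N ∪ s.image fun x => insert x (N x)))
  have hbad : #bad < #s.powerset := by
    have : #bad ≤ #(insert s (s.image N ∪ s.image fun x => insert x (N x))) + 1 :=
      card_insert_le _ _
    have := card_insert_le s (s.image N ∪ s.image fun x => insert x (N x))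
    have := card_union_le (s.image N) (s.image fun x => insert x (N x))
    have := card_image_le (s := s) (f := N)
    have := card_image_le (s := s) (f := fun x => insert x (N x))
    have hpow : ∀ n, 4 ≤ n → 2 + 2 * n < 2 ^ n := fun n hn => by
      induction n, hn using Nat.le_induction with
      | base => norm_num
      | succ n _ ih => rw [pow_succ]; omega
    have := hpow #s hs
    rw [card_powerset]
    omega
  obtain ⟨t, hts, htbad⟩ := exists_mem_notMem_of_card_lt_card hbad
  simp only [bad, mem_insert, mem_union, mem_image, not_or, not_exists, not_and] at htbad
  refine ⟨t, mem_powerset.mp hts, nonempty_iff_ne_empty.mpr htbad.1, htbad.2.1,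
    fun x hx hN => ?_⟩
  by_cases hxt : x ∈ t
  · exact htbad.2.2.2 x hx (by rw [← hN, insert_erase hxt])
  · exact htbad.2.2.1 x hx (by rw [← hN, erase_eq_of_notMem hxt])

section Modules

variable {V W : Type*} {G : SimpleGraph V} {M N : Set V}

theorem isModule_iff :
    IsModule G M ↔ ∀ v ∉ M, ∀ a ∈ M, ∀ b ∈ M, (G.Adj v a ↔ G.Adj v b) := by
  refine ⟨fun h v hv a ha b hb => ?_, fun h v hv => ?_⟩
  · rcases h v hv with h | h <;> simp [h a ha, h b hb]
  · by_cases hva : ∃ a ∈ M, G.Adj v a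
    · obtain ⟨a, ha, hadj⟩ := hva
      exact Or.inl fun b hb => (h v hv a ha b hb).mp hadj
    · push Not at hva
      exact Or.inr hva

theorem IsModule.adj_iff (hM : IsModule G M) {v a b : V} (hv : v ∉ M) (ha : a ∈ M)
    (hb : b ∈ M) : G.Adj v a ↔ G.Adj v b :=
  isModule_iff.mp hM v hv a ha b hb

theorem IsModule.comap {H : SimpleGraph W} {M : Set W} (hM : IsModule H M) (f : V → W) :
    IsModule (H.comap f) (f ⁻¹' M) :=
  isModule_iff.mpr fun _ hv _ ha _ hb => hM.adj_iff hv ha hb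

theorem IsModule.inter (hM : IsModule G M) (hN : IsModule G N) : IsModule G (M ∩ N) :=
  isModule_iff.mpr fun v hv a ha b hb => by
    by_cases hvM : v ∈ M
    · exact hN.adj_iff (fun hvN => hv ⟨hvM, hvN⟩) ha.2 hb.2
    · exact hM.adj_iff hvM ha.1 hb.1

theorem IsModule.diff (hM : IsModule G M) (hN : IsModule G N) (hNM : ¬N ⊆ M) :
    IsModule G (M \ N) := by
  obtain ⟨u, huN, huM⟩ := Set.not_subset.mp hNM
  refine isModule_iff.mpr fun v hv a ha b hb => ?_
  by_cases hvM : v ∈ M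
  · have hvN : v ∈ N := not_not.mp fun hvN => hv ⟨hvM, hvN⟩
    calc G.Adj v a ↔ G.Adj a u := by rw [G.adj_comm]; exact hN.adj_iff ha.2 hvN huN
      _ ↔ G.Adj b u := by rw [G.adj_comm a, G.adj_comm b]; exact hM.adj_iff huM ha.1 hb.1
      _ ↔ G.Adj v b := by rw [G.adj_comm v]; exact (hN.adj_iff hb.2 hvN huN).symm
  · exact hM.adj_iff hvM ha.1 hb.1

theorem IsModule.pair_of_triple {a b c : V} (h : IsModule G {a, b, c})
    (hc : G.Adj c a ↔ G.Adj c b) : IsModule G {a, b} :=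
  isModule_iff.mpr fun v hv x hx y hy => by
    by_cases hvc : v = c
    · subst hvc
      rcases hx with rfl | rfl <;> rcases hy with rfl | rfl <;> tauto
    · have hsub : ({a, b} : Set V) ⊆ {a, b, c} := Set.insert_subset_insert (by simp)
      exact h.adj_iff (by simp_all) (hsub hx) (hsub hy)

theorem not_isModule_triple (h2 : ∀ x y, x ≠ y → ¬IsModule G {x, y}) {a b c : V}
    (hab : a ≠ b) (hac : a ≠ c) (hbc : b ≠ c) : ¬IsModule G {a, b, c} := by
  intro h
  have : (G.Adj c a ↔ G.Adj c b) ∨ (G.Adj b a ↔ G.Adj b c) ∨ (G.Adj a b ↔ G.Adj a c) := by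
    rw [G.adj_comm c a, G.adj_comm c b, G.adj_comm b a]
    tauto
  rcases this with h' | h' | h'
  · exact h2 a b hab (h.pair_of_triple h')
  · exact h2 a c hac (IsModule.pair_of_triple (c := b) (by rwa [Set.pair_comm c b]) h')
  · refine h2 b c hbc (IsModule.pair_of_triple (c := a) ?_ h')
    rwa [Set.pair_comm c a, Set.insert_comm b a]

theorem IsModule.four_le_ncard [Finite V] (h2 : ∀ x y, x ≠ y → ¬IsModule G {x, y})
    (hM : IsModule G M) (hnt : M.Nontrivial) : 4 ≤ M.ncard := by
  have h1 := Set.one_lt_ncard_iff_nontrivial.mpr hnt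
  have hn2 : M.ncard ≠ 2 := fun h => by
    obtain ⟨x, y, hxy, rfl⟩ := Set.ncard_eq_two.mp h
    exact h2 x y hxy hM
  have hn3 : M.ncard ≠ 3 := fun h => by
    obtain ⟨x, y, z, hxy, hxz, hyz, rfl⟩ := Set.ncard_eq_three.mp h
    exact not_isModule_triple h2 hxy hxz hyz hM
  omega

end Modules

section MinimalModules

variable {V : Type*} {G : SimpleGraph V} {M N F : Set V}

def IsNontrivialModule (G : SimpleGraph V) (M : Set V) : Prop :=
  IsModule G M ∧ M.Nontrivial ∧ M ≠ Set.univ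

theorem Minimal.subsingleton_of_isModule (hF : Minimal (IsNontrivialModule G) F)
    (hN : IsModule G N) (hNF : N ⊂ F) : N.Subsingleton := by
  by_contra hnt
  refine hF.not_prop_of_lt hNF ⟨hN, Set.not_subsingleton_iff.mp hnt, ?_⟩
  rintro rfl
  exact hNF.2 (Set.subset_univ F)

theorem Minimal.subset_or_disjoint [Finite V] (h2 : ∀ x y, x ≠ y → ¬IsModule G {x, y})
    (hF : Minimal (IsNontrivialModule G) F) (hM : IsNontrivialModule G M) :
    F ⊆ M ∨ Disjoint F M := by
  by_contra! h
  obtain ⟨hFM, hmeet⟩ := h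
  have hMF : ¬M ⊆ F := fun hMF => hFM (hF.eq_of_ge hM hMF).le
  have hinter := hF.subsingleton_of_isModule (hF.prop.1.inter hM.1)
    (Set.inter_ssubset_left_iff.mpr hFM)
  have hdiff := hF.subsingleton_of_isModule (hF.prop.1.diff hM.1 hMF)
    (Set.sdiff_ssubset_left_iff.mpr (Set.not_disjoint_iff_nonempty_inter.mp hmeet))
  have h4 := hF.prop.1.four_le_ncard h2 hF.prop.2.1
  rw [← Set.ncard_inter_add_ncard_sdiff_eq_ncard F M] at h4
  have := Set.ncard_le_one_iff_subsingleton.mpr hinter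
  have := Set.ncard_le_one_iff_subsingleton.mpr hdiff
  omega

theorem Minimal.eq_or_disjoint [Finite V] (h2 : ∀ x y, x ≠ y → ¬IsModule G {x, y})
    {F' : Set V} (hF : Minimal (IsNontrivialModule G) F)
    (hF' : Minimal (IsNontrivialModule G) F') : F = F' ∨ Disjoint F F' :=
  (hF.subset_or_disjoint h2 hF'.prop).imp_left fun h => hF'.eq_of_le hF.prop h

theorem exists_minimal_isNontrivialModule_subset [Finite V]
    (h0 : ∃ M₀, IsNontrivialModule G M₀) (hM : IsModule G M) (hnt : M.Nontrivial) :
    ∃ F ⊆ M, Minimal (IsNontrivialModule G) F := by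
  obtain ⟨M', hM', hM'M⟩ : ∃ M', IsNontrivialModule G M' ∧ M' ⊆ M := by
    by_cases hMu : M = Set.univ
    · obtain ⟨M₀, hM₀⟩ := h0
      exact ⟨M₀, hM₀, hMu ▸ Set.subset_univ M₀⟩
    · exact ⟨M, ⟨hM, hnt, hMu⟩, subset_rfl⟩
  obtain ⟨F, hFM', hF⟩ := exists_minimal_le_of_wellFoundedLT _ M' hM'
  exact ⟨F, hFM'.trans hM'M, hF⟩

end MinimalModules

section Splitting

variable {V : Type*} {G : SimpleGraph V} {F : Set V}

structure IsSplitting (G : SimpleGraph V) (F T : Set V) : Prop where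
  subset : T ⊆ F
  nonempty : T.Nonempty
  diff_nonempty : (F \ T).Nonempty
  exists_ne : ∀ x ∈ F, ∃ u ∈ F, u ≠ x ∧ (u ∈ T ↔ ¬G.Adj u x)

theorem exists_isSplitting (hF : 4 ≤ F.ncard) : ∃ T, IsSplitting G F T := by
  classical
  have hfin : F.Finite := Set.finite_of_ncard_pos (by omega)
  obtain ⟨t, hts, htne, hts_ne, hN⟩ := Finset.exists_subset_forall_erase_ne
    (s := hfin.toFinset) (by rwa [← Set.ncard_eq_toFinset_card F hfin])
    (fun x => hfin.toFinset.filter (G.Adj x))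
  have htF : (t : Set V) ⊆ F := fun u hu => by simpa using hts hu
  refine ⟨t, htF, htne, ?_, fun x hx => ?_⟩
  · obtain ⟨u, hu, hut⟩ :=
      Finset.exists_of_ssubset (Finset.ssubset_iff_subset_ne.mpr ⟨hts, hts_ne⟩)
    exact ⟨u, by simpa using hu, hut⟩
  · by_contra! h
    refine hN x (by simpa using hx) (Finset.ext fun u => ?_)
    simp only [Finset.mem_erase, Finset.mem_filter, Set.Finite.mem_toFinset]
    constructor
    · rintro ⟨hux, hu⟩
      have := h u (htF hu) hux
      exact ⟨htF hu, by rw [G.adj_comm]; tauto⟩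
    · rintro ⟨huF, hadj⟩
      have := h u huF (G.ne_of_adj hadj).symm
      exact ⟨(G.ne_of_adj hadj).symm, by rw [G.adj_comm] at hadj; tauto⟩

end Splitting

section SeparatingSet

variable {V : Type*} {G : SimpleGraph V} {T : Set V → Set V} {f₀ v : V} {M F : Set V}

def SplitsModules (G : SimpleGraph V) (S : Set V) : Prop :=
  ∀ M, IsModule G M → M.Nontrivial → (∃ a ∈ M, a ∈ S) ∧ ∃ b ∈ M, b ∉ S

def SeparatesModules (G : SimpleGraph V) (S : Set V) : Prop :=
  ∀ M, IsModule G M → M.Nonempty → M ≠ Set.univ →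
    ∃ u ∉ M, ∀ m ∈ M, (u ∈ S ↔ ¬G.Adj u m)

def separatingSet (G : SimpleGraph V) (T : Set V → Set V) (f₀ : V) : Set V :=
  {v | (∃ F, Minimal (IsNontrivialModule G) F ∧ v ∈ T F) ∨
    ((∀ F, Minimal (IsNontrivialModule G) F → v ∉ F) ∧ ¬G.Adj v f₀)}

theorem mem_separatingSet_iff_of_mem [Finite V] (h2 : ∀ x y, x ≠ y → ¬IsModule G {x, y})
    (hT : ∀ F, Minimal (IsNontrivialModule G) F → IsSplitting G F (T F))
    (hF : Minimal (IsNontrivialModule G) F) (hv : v ∈ F) :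
    v ∈ separatingSet G T f₀ ↔ v ∈ T F := by
  refine ⟨?_, fun h => Or.inl ⟨F, hF, h⟩⟩
  rintro (⟨F', hF', hvT⟩ | ⟨hv', -⟩)
  · rcases hF'.eq_or_disjoint h2 hF with rfl | hdisj
    · exact hvT
    · exact (Set.disjoint_left.mp hdisj ((hT F' hF').subset hvT) hv).elim
  · exact (hv' F hF hv).elim

theorem mem_separatingSet_iff_of_forall_notMem
    (hT : ∀ F, Minimal (IsNontrivialModule G) F → IsSplitting G F (T F))
    (hv : ∀ F, Minimal (IsNontrivialModule G) F → v ∉ F) :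
    v ∈ separatingSet G T f₀ ↔ ¬G.Adj v f₀ := by
  refine ⟨?_, fun h => Or.inr ⟨hv, h⟩⟩
  rintro (⟨F, hF, hvT⟩ | ⟨-, h⟩)
  · exact (hv F hF ((hT F hF).subset hvT)).elim
  · exact h

theorem splitsModules_separatingSet [Finite V] (h2 : ∀ x y, x ≠ y → ¬IsModule G {x, y})
    (h0 : ∃ M₀, IsNontrivialModule G M₀)
    (hT : ∀ F, Minimal (IsNontrivialModule G) F → IsSplitting G F (T F)) :
    SplitsModules G (separatingSet G T f₀) := by
  intro M hM hnt
  obtain ⟨F, hFM, hF⟩ := exists_minimal_isNontrivialModule_subset h0 hM hnt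
  obtain ⟨a, haT⟩ := (hT F hF).nonempty
  obtain ⟨b, hbF, hbT⟩ := (hT F hF).diff_nonempty
  have haF := (hT F hF).subset haT
  exact ⟨⟨a, hFM haF, (mem_separatingSet_iff_of_mem h2 hT hF haF).mpr haT⟩,
    ⟨b, hFM hbF, fun hb => hbT ((mem_separatingSet_iff_of_mem h2 hT hF hbF).mp hb)⟩⟩

theorem exists_separating_of_disjoint [Finite V] (h2 : ∀ x y, x ≠ y → ¬IsModule G {x, y})
    (hT : ∀ F, Minimal (IsNontrivialModule G) F → IsSplitting G F (T F))
    (hF : Minimal (IsNontrivialModule G) F) (hM : IsModule G M) (hne : M.Nonempty)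
    (hFM : Disjoint F M) :
    ∃ u ∉ M, ∀ m ∈ M, (u ∈ separatingSet G T f₀ ↔ ¬G.Adj u m) := by
  obtain ⟨m₀, hm₀⟩ := hne
  have hnotMem : ∀ u ∈ F, u ∉ M := fun u hu => Set.disjoint_left.mp hFM hu
  have hadj : ∀ u ∈ F, ∀ m ∈ M, (G.Adj u m ↔ G.Adj m₀ u) := fun u hu m hm => by
    rw [hM.adj_iff (hnotMem u hu) hm hm₀, G.adj_comm]
  rcases hF.prop.1 m₀ (fun h => hnotMem m₀ h hm₀) with hall | hnone
  · obtain ⟨u, huF, huT⟩ := (hT F hF).diff_nonempty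
    refine ⟨u, hnotMem u huF, fun m hm => ?_⟩
    rw [mem_separatingSet_iff_of_mem h2 hT hF huF, hadj u huF m hm]
    simp [huT, hall u huF]
  · obtain ⟨u, huT⟩ := (hT F hF).nonempty
    have huF := (hT F hF).subset huT
    refine ⟨u, hnotMem u huF, fun m hm => ?_⟩
    rw [mem_separatingSet_iff_of_mem h2 hT hF huF, hadj u huF m hm]
    simp [huT, hnone u huF]

theorem separatesModules_separatingSet [Finite V] (h2 : ∀ x y, x ≠ y → ¬IsModule G {x, y})
    (hT : ∀ F, Minimal (IsNontrivialModule G) F → IsSplitting G F (T F)) {F₀ : Set V}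
    (hF₀ : Minimal (IsNontrivialModule G) F₀) (hf₀ : f₀ ∈ F₀) :
    SeparatesModules G (separatingSet G T f₀) := by
  intro M hM hne hMu
  by_cases hdisj : ∃ F, Minimal (IsNontrivialModule G) F ∧ Disjoint F M
  · obtain ⟨F, hF, hFM⟩ := hdisj
    exact exists_separating_of_disjoint h2 hT hF hM hne hFM
  push Not at hdisj
  rcases M.subsingleton_or_nontrivial with hsub | hnt
  · obtain ⟨x, hxF₀, hxM⟩ := Set.not_disjoint_iff.mp (hdisj F₀ hF₀)
    obtain ⟨u, huF₀, hux, huT⟩ := (hT F₀ hF₀).exists_ne x hxF₀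
    refine ⟨u, fun huM => hux (hsub huM hxM), fun m hm => ?_⟩
    rwa [hsub hm hxM, mem_separatingSet_iff_of_mem h2 hT hF₀ huF₀]
  · have hFM : ∀ F, Minimal (IsNontrivialModule G) F → F ⊆ M := fun F hF =>
      (hF.subset_or_disjoint h2 ⟨hM, hnt, hMu⟩).resolve_right (hdisj F hF)
    obtain ⟨u, hu⟩ := (Set.ne_univ_iff_exists_notMem M).mp hMu
    refine ⟨u, hu, fun m hm => ?_⟩
    rw [mem_separatingSet_iff_of_forall_notMem hT fun F hF huF => hu (hFM F hF huF),
      hM.adj_iff hu (hFM F₀ hF₀ hf₀) hm]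

theorem exists_splitsModules_separatesModules [Finite V]
    (h2 : ∀ x y, x ≠ y → ¬IsModule G {x, y}) (h0 : ∃ M₀, IsNontrivialModule G M₀) :
    ∃ S, SplitsModules G S ∧ SeparatesModules G S := by
  have hT : ∀ F, ∃ T, Minimal (IsNontrivialModule G) F → IsSplitting G F T := fun F => by
    by_cases hF : Minimal (IsNontrivialModule G) F
    · exact (exists_isSplitting (hF.prop.1.four_le_ncard h2 hF.prop.2.1)).imp fun _ h _ => h
    · exact ⟨∅, fun h => absurd h hF⟩
  choose T hT using hT
  obtain ⟨M₀, hM₀⟩ := h0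
  obtain ⟨F₀, -, hF₀⟩ := exists_minimal_le_of_wellFoundedLT _ M₀ hM₀
  obtain ⟨f₀, hf₀⟩ := hF₀.prop.2.1.nonempty
  exact ⟨separatingSet G T f₀, splitsModules_separatingSet h2 ⟨M₀, hM₀⟩ hT,
    separatesModules_separatingSet h2 hT hF₀ hf₀⟩

end SeparatingSet

section OneVertexExtension

variable {V W : Type*} {G : SimpleGraph V} {S : Set V}

def addVertex (G : SimpleGraph V) (S : Set V) : SimpleGraph (V ⊕ Fin 1) where
  Adj
    | .inl a, .inl b => G.Adj a b
    | .inl a, .inr _ => a ∈ S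
    | .inr _, .inl b => b ∈ S
    | .inr _, .inr _ => False
  symm := by
    constructor
    rintro (a | _) (b | _) h
    exacts [G.adj_symm h, h, h, h]
  loopless := by
    constructor
    rintro (a | _) h
    exacts [G.loopless.irrefl a h, h]

theorem isPrimeGraph_addVertex [Finite V] (h3 : 3 ≤ Nat.card V) (hsplit : SplitsModules G S)
    (hsep : SeparatesModules G S) : IsPrimeGraph (addVertex G S) := by
  refine ⟨by simp [Nat.card_sum]; omega, fun N hN => ?_⟩
  have hM : IsModule G (Sum.inl ⁻¹' N) := hN.comap Sum.inl
  have hw (i : Fin 1) : (Sum.inr i : V ⊕ Fin 1) = .inr 0 := by rw [Subsingleton.elim i 0]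
  by_cases hwN : .inr 0 ∈ N
  · rcases (Sum.inl ⁻¹' N).eq_empty_or_nonempty with hMe | hMne
    · right
      rintro (a | i) ha (b | j) hb
      · exact ((Set.eq_empty_iff_forall_notMem.mp hMe) a ha).elim
      · exact ((Set.eq_empty_iff_forall_notMem.mp hMe) a ha).elim
      · exact ((Set.eq_empty_iff_forall_notMem.mp hMe) b hb).elim
      · rw [hw i, hw j]
    by_cases hMu : Sum.inl ⁻¹' N = Set.univ
    · left
      refine Set.eq_univ_of_forall ?_
      rintro (a | i)
      · exact Set.eq_univ_iff_forall.mp hMu a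
      · rwa [hw i]
    · obtain ⟨u, hu, hsu⟩ := hsep _ hM hMne hMu
      obtain ⟨m, hm⟩ := hMne
      have : u ∈ S ↔ G.Adj u m := hN.adj_iff hu hwN hm
      exact (not_iff_self ((hsu m hm).symm.trans this)).elim
  · right
    rcases (Sum.inl ⁻¹' N).subsingleton_or_nontrivial with hMs | hnt
    · rintro (a | i) ha (b | j) hb
      · rw [hMs ha hb]
      · exact (hwN (hw j ▸ hb)).elim
      · exact (hwN (hw i ▸ ha)).elim
      · exact (hwN (hw i ▸ ha)).elim
    · obtain ⟨⟨a, ha, haS⟩, b, hb, hbS⟩ := hsplit _ hM hnt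
      have : a ∈ S ↔ b ∈ S := hN.adj_iff hwN ha hb
      exact (hbS (this.mp haS)).elim

end OneVertexExtension

theorem IsPrimeGraph.comap_equiv {V W : Type*} {H : SimpleGraph W} (hH : IsPrimeGraph H)
    (e : V ≃ W) : IsPrimeGraph (H.comap e) := by
  refine ⟨Nat.card_congr e ▸ hH.1, fun M hM => ?_⟩
  have hM' : IsModule H (e.symm ⁻¹' M) :=
    isModule_iff.mpr fun _ hv _ ha _ hb => by simpa using hM.adj_iff hv ha hb
  rw [← e.preimage_symm_preimage M]
  exact (hH.2 _ hM').imp (fun h => by rw [h, Set.preimage_univ]) fun h => h.preimage e.injective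

theorem isPrimeGraph_of_hasPrimeExt_zero {V : Type*} {G : SimpleGraph V}
    (h : HasPrimeExt G 0) : IsPrimeGraph G := by
  obtain ⟨H, hHG, hH⟩ := h
  have : H.comap (Equiv.sumEmpty V (Fin 0)).symm = G := by
    ext a b
    exact hHG a b
  exact this ▸ hH.comap_equiv _

theorem isCliqueSet_or_isStableSet_pair {V : Type*} (G : SimpleGraph V) (a b : V) :
    IsCliqueSet G {a, b} ∨ IsStableSet G {a, b} := by
  by_cases h : G.Adj a b
  · left
    rintro x (rfl | rfl) y (rfl | rfl) hxy <;>
      first | exact (hxy rfl).elim | exact h | exact h.symm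
  · right
    rintro x (rfl | rfl) y (rfl | rfl) <;>
      first | exact G.loopless.irrefl _ | exact h | exact fun h' => h h'.symm

theorem prime_bound_one {V : Type*} [Finite V] (G : SimpleGraph V)
    (hnp : ¬ IsPrimeGraph G) (h4 : 4 ≤ Nat.card V)
    (hm : ∀ M : Set V, IsModule G M →
      (IsCliqueSet G M ∨ IsStableSet G M) → M.ncard ≤ 1) :
    HasPrimeExt G 1 ∧ primeBound G = 1 := by
  have h2 : ∀ a b, a ≠ b → ¬IsModule G {a, b} := fun a b hab hM => by
    have := hm _ hM (isCliqueSet_or_isStableSet_pair G a b)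
    rw [Set.ncard_pair hab] at this
    omega
  have h0 : ∃ M, IsNontrivialModule G M := by
    simp only [IsPrimeGraph, h4, true_and, not_forall, not_or, Set.not_subsingleton_iff] at hnp
    obtain ⟨M, hM, hMu, hnt⟩ := hnp
    exact ⟨M, hM, hnt, hMu⟩
  obtain ⟨S, hsplit, hsep⟩ := exists_splitsModules_separatesModules h2 h0
  have h1 : HasPrimeExt G 1 :=
    ⟨addVertex G S, fun _ _ => Iff.rfl, isPrimeGraph_addVertex (by omega) hsplit hsep⟩
  have hbound : HasPrimeExt G (primeBound G) :=
    Nat.sInf_mem (s := {p | HasPrimeExt G p}) ⟨1, h1⟩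
  refine ⟨h1, le_antisymm (Nat.sInf_le h1) (Nat.one_le_iff_ne_zero.mpr fun h => ?_)⟩
  exact hnp (isPrimeGraph_of_hasPrimeExt_zero (h ▸ hbound))
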